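/- For all real α, β ≠ 0, γ, x, λ ∈ ℕ with λ ≥ 1, and n ≥ 0: A^{λ,x}_{n+1}(α,β,γ-α) - (x+1)·λ·β · A^{λ+1,x}_n(α,β,γ) = (γ - α - λβ) · A^{λ,x}_n(α,β,γ). -/

import Mathlib

open Finset

/-- Generalized factorial polynomial `(t|α)_n = ∏_{j=0}^{n-1} (t - jα)`. -/
noncomputable def gfact (t α : ℝ) (n : ℕ) : ℝ := ∏ j ∈ Finset.range n, (t - j * α)

/-- Hsu–Shiue generalized Stirling numbers (explicit formula, β ≠ 0). -/
noncomputable def HS (n k : ℕ) (α β γ : ℝ) : ℝ :=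
  (1 / (β ^ k * (Nat.factorial k : ℝ))) *
    ∑ s ∈ Finset.range (k + 1), (-1 : ℝ) ^ (k - s) * (Nat.choose k s : ℝ) * gfact (β * s + γ) α n

/-- Second-type higher order generalized geometric polynomials. -/
noncomputable def A (lam : ℕ) (x : ℝ) (n : ℕ) (α β γ : ℝ) : ℝ :=
  ∑ k ∈ Finset.range (n + 1),
    (Nat.choose (k + lam - 1) k : ℝ) * (-1 : ℝ) ^ (n + k) * β ^ k * (Nat.factorial k : ℝ) *
      HS n k α (-β) (-γ) * x ^ k

/-!
Up to signs and the factor `β ^ k * k !` that cancels the normalisation of `HS`, the `k`-th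
coefficient of `A lam x m α β γ` is the `k`-th forward difference at `0` of
`P t = gfact (β * t + γ) (-α) m = ∏ j < m, (β * t + γ + j * α)`. Replacing `(m, γ)` by
`(n + 1, γ - α)` multiplies `P` by `β * t + γ - α`, and the discrete Leibniz rule
`Δ^k ((a t + b) f) 0 = (a k + b) Δ^k f 0 + a k Δ^(k-1) f 0` together with
`(λ + k) C(k+λ-1, k) = λ C(k+λ, k)` and `(k + 1) C(k+λ, k+1) = λ C(k+λ, k)` regroups the sum
into the right-hand side. The top term disappears because `Δ^(n+1)` kills the degree-`n`
polynomial `P`.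
-/

open fwdDiff

theorem gfact_succ (t α : ℝ) (m : ℕ) : gfact t α (m + 1) = t * gfact (t - α) α m := by
  rw [gfact, gfact, prod_range_succ', mul_comm]
  simp only [Nat.cast_zero, zero_mul, sub_zero, Nat.cast_succ]
  exact congrArg (t * ·) (prod_congr rfl fun j _ ↦ by ring)

theorem gfact_neg (t α : ℝ) (m : ℕ) : gfact (-t) α m = (-1) ^ m * gfact t (-α) m := by
  have h := prod_neg (s := range m) fun j : ℕ ↦ t - j * -α
  rw [card_range] at h
  rw [gfact, gfact, ← h]
  exact prod_congr rfl fun j _ ↦ by ring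

theorem fwdDiff_iter_const_eq_zero {M G : Type*} [AddCommMonoid M] [AddCommGroup G] (h : M)
    (c : G) {k : ℕ} (hk : 0 < k) : Δ_[h] ^[k] (fun _ ↦ c : M → G) = 0 := by
  obtain ⟨k, rfl⟩ := Nat.exists_eq_add_of_lt hk
  rw [zero_add, Function.iterate_succ_apply, fwdDiff_const]
  exact Function.iterate_fixed (fwdDiff_const h 0) k

-- The truncated `k - 1` only matters at `k = 0`, where its term carries the factor `k = 0`.
theorem fwdDiff_iter_affine_mul {R : Type*} [CommRing R] (a b : R) (f : R → R) (k : ℕ) (y : R) :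
    Δ_[1] ^[k] (fun t ↦ (a * t + b) * f t) y =
      (a * (y + k) + b) * Δ_[1] ^[k] f y + a * k * Δ_[1] ^[k - 1] f y := by
  induction k generalizing y with
  | zero => simp
  | succ k ih =>
    have hprev :
        (k : R) * (Δ_[1] ^[k - 1] f (y + 1) - Δ_[1] ^[k - 1] f y) = k * Δ_[1] ^[k] f y := by
      cases k with
      | zero => simp
      | succ k => simp only [Nat.add_sub_cancel, Function.iterate_succ_apply' _ k, fwdDiff]
    simp only [Function.iterate_succ_apply' _ k, fwdDiff, ih, Nat.add_sub_cancel] at hprev ⊢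
    push_cast
    linear_combination a * hprev

theorem HS_neg_eq (n k : ℕ) (α β γ : ℝ) :
    HS n k α (-β) (-γ) =
      (-1) ^ n / ((-β) ^ k * k.factorial) *
        Δ_[1] ^[k] (fun t ↦ gfact (β * t + γ) (-α) n) 0 := by
  rw [HS, fwdDiff_iter_eq_sum_shift, mul_sum, mul_sum]
  refine sum_congr rfl fun s _ ↦ ?_
  rw [show -β * s + -γ = -(β * s + γ) by ring, gfact_neg]
  simp only [zsmul_eq_mul, nsmul_eq_mul, zero_add, mul_one]
  push_cast
  ring

theorem fwdDiff_iter_gfact_affine_eq_zero (α β γ : ℝ) {n k : ℕ} (hk : n < k) :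
    Δ_[1] ^[k] (fun t ↦ gfact (β * t + γ) α n) = 0 := by
  let p : Polynomial ℝ := ∏ j ∈ range n, (.C β * .X + .C (γ - j * α))
  have hp : p.eval = fun t ↦ gfact (β * t + γ) α n := by
    funext t
    simp [p, gfact, Polynomial.eval_prod, add_sub_assoc]
  have hdeg : p.natDegree ≤ n :=
    (Polynomial.natDegree_prod_le _ _).trans <|
      (sum_le_sum fun _ _ ↦ Polynomial.natDegree_linear_le).trans (by simp)
  rw [← hp]
  exact Polynomial.fwdDiff_iter_eq_zero_of_degree_lt (hdeg.trans_lt hk)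

theorem A_eq_sum_fwdDiff_iter (lam : ℕ) (x : ℝ) (m : ℕ) (α β γ : ℝ) :
    A lam x m α β γ = ∑ k ∈ range (m + 1),
      ((k + lam - 1).choose k : ℝ) * x ^ k *
        Δ_[1] ^[k] (fun t ↦ gfact (β * t + γ) (-α) m) 0 := by
  refine sum_congr rfl fun k _ ↦ ?_
  rw [HS_neg_eq]
  -- For `β = 0` and `k > 0` the factor `1 / (-β) ^ k` is the junk value `0`, and so is `Δ^k` of
  -- the then constant product.
  rcases eq_or_ne β 0 with rfl | hβ
  · rcases k.eq_zero_or_pos with rfl | hk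
    · simp [← mul_assoc, ← mul_pow]
    · simp only [zero_mul, zero_add]
      rw [fwdDiff_iter_const_eq_zero _ _ hk]
      simp [hk.ne']
  · set D := Δ_[1] ^[k] (fun t ↦ gfact (β * t + γ) (-α) m) 0
    have hscalar :
        (-1 : ℝ) ^ (m + k) * β ^ k * k.factorial *
          ((-1) ^ m / ((-β) ^ k * k.factorial)) = 1 := by
      have hden : (-β) ^ k * k.factorial ≠ 0 :=
        mul_ne_zero (pow_ne_zero _ (neg_ne_zero.2 hβ)) (Nat.cast_ne_zero.2 k.factorial_ne_zero)
      have hsign : ((-1 : ℝ) ^ m) ^ 2 = 1 := by rw [← pow_mul, mul_comm, pow_mul]; norm_num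
      rw [mul_div_assoc', div_eq_one_iff_eq hden, neg_pow, pow_add]
      linear_combination ((-1) ^ k * β ^ k * k.factorial : ℝ) * hsign
    linear_combination ((k + lam - 1).choose k * x ^ k * D : ℝ) * hscalar

theorem Nat.add_mul_choose_add_sub_one (lam k : ℕ) :
    (lam + k) * (k + lam - 1).choose k = lam * (k + lam).choose k := by
  cases lam with
  | zero => cases k <;> simp
  | succ l =>
    have h := Nat.choose_mul_succ_eq (k + l) k
    rw [show k + l + 1 - k = l + 1 by omega] at h
    rw [show k + (l + 1) - 1 = k + l by omega, ← add_assoc, mul_comm, add_comm (l + 1) k,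
      ← add_assoc, h, mul_comm]

theorem Nat.succ_mul_choose_add (k lam : ℕ) :
    (k + 1) * (k + lam).choose (k + 1) = lam * (k + lam).choose k := by
  rw [mul_comm, Nat.choose_succ_right_eq, Nat.add_sub_cancel_left, mul_comm]

theorem sum_choose_pow_mul_affine_shift (lam n : ℕ) (x β b : ℝ) (D : ℕ → ℝ)
    (hD : D (n + 1) = 0) :
    ∑ k ∈ range (n + 2),
        ((k + lam - 1).choose k : ℝ) * x ^ k * ((β * k + b) * D k + β * k * D (k - 1)) =
      (x + 1) * lam * β * ∑ k ∈ range (n + 1), ((k + lam).choose k : ℝ) * x ^ k * D k +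
        (b - lam * β) * ∑ k ∈ range (n + 1), ((k + lam - 1).choose k : ℝ) * x ^ k * D k := by
  have hdiag (k : ℕ) : ((k + lam - 1).choose k : ℝ) * x ^ k * ((β * k + b) * D k) =
      lam * β * (((k + lam).choose k : ℝ) * x ^ k * D k) +
        (b - lam * β) * (((k + lam - 1).choose k : ℝ) * x ^ k * D k) := by
    have h : ((lam : ℝ) + k) * (k + lam - 1).choose k = lam * (k + lam).choose k := by
      exact_mod_cast Nat.add_mul_choose_add_sub_one lam k
    linear_combination β * x ^ k * D k * h
  have hshift (k : ℕ) : ((k + lam).choose (k + 1) : ℝ) * x ^ (k + 1) * (β * (k + 1) * D k) =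
      x * lam * β * (((k + lam).choose k : ℝ) * x ^ k * D k) := by
    have h : ((k : ℝ) + 1) * (k + lam).choose (k + 1) = lam * (k + lam).choose k := by
      exact_mod_cast Nat.succ_mul_choose_add k lam
    linear_combination β * x ^ (k + 1) * D k * h
  set T : ℕ → ℝ := fun k ↦ ((k + lam).choose k : ℝ) * x ^ k * D k
  set T' : ℕ → ℝ := fun k ↦ ((k + lam - 1).choose k : ℝ) * x ^ k * D k
  calc _ = ∑ k ∈ range (n + 2), (lam * β * T k + (b - lam * β) * T' k) +
        ∑ k ∈ range (n + 2), ((k + lam - 1).choose k : ℝ) * x ^ k * (β * k * D (k - 1)) := by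
        rw [← sum_add_distrib]
        exact sum_congr rfl fun k _ ↦ by rw [mul_add, hdiag]
    _ = ∑ k ∈ range (n + 1), (lam * β * T k + (b - lam * β) * T' k) +
        ∑ k ∈ range (n + 1), x * lam * β * T k := by
        rw [sum_range_succ _ (n + 1), sum_range_succ' _ (n + 1)]
        simp [T, T', hD, hshift]
    _ = _ := by
        rw [sum_add_distrib, ← mul_sum, ← mul_sum, ← mul_sum]
        ring

theorem stmt4_general (α β γ x : ℝ) (lam : ℕ) (n : ℕ) :
    A lam x (n + 1) α β (γ - α) - (x + 1) * lam * β * A (lam + 1) x n α β γ =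
      (γ - α - lam * β) * A lam x n α β γ := by
  have hfactor : (fun t ↦ gfact (β * t + (γ - α)) (-α) (n + 1)) =
      fun t ↦ (β * t + (γ - α)) * gfact (β * t + γ) (-α) n := by
    funext t
    rw [gfact_succ, sub_neg_eq_add, add_assoc, sub_add_cancel]
  have hvanish := congrFun (fwdDiff_iter_gfact_affine_eq_zero (-α) β γ (Nat.lt_succ_self n)) 0
  simp only [A_eq_sum_fwdDiff_iter, hfactor, fwdDiff_iter_affine_mul, zero_add,
    Nat.add_succ_sub_one]
  rw [sum_choose_pow_mul_affine_shift lam n x β (γ - α) _ hvanish]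
  ring

theorem stmt4 (α β γ x : ℝ) (hβ : β ≠ 0) (lam : ℕ) (hlam : 1 ≤ lam) (n : ℕ) :
    A lam x (n + 1) α β (γ - α) - (x + 1) * lam * β * A (lam + 1) x n α β γ =
      (γ - α - lam * β) * A lam x n α β γ :=
  stmt4_general α β γ x lam n
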